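/- Let P be a countable partial order which is IĒ-homogeneous, which is not a chain (it has an incomparable pair), not an antichain (it has a pair a < b), and all of whose antichains are finite. Then P is not MĒ-homogeneous: there exists an injective <-preserving map between finite subsets of P which has no extension to a surjective ≤-preserving map P → P. -/

import Mathlib

/-- `x` and `y` are incomparable in a poset. -/
def Incomp {P : Type*} [PartialOrder P] (x y : P) : Prop := ¬ x ≤ y ∧ ¬ y ≤ x

/-- A finite partial isomorphism of a poset `P`. -/
def IsFinPartIso {P : Type*} [PartialOrder P] (A : Finset P) (f : P → P) : Prop :=
  ∀ a₁ ∈ A, ∀ a₂ ∈ A, (a₁ ≤ a₂ ↔ f a₁ ≤ f a₂)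

/-- `P` is IĒ-homogeneous: every finite partial isomorphism extends to a surjective
≤-preserving map `P → P`. -/
def IEbarHomogeneous (P : Type*) [PartialOrder P] : Prop :=
  ∀ (A : Finset P) (f : P → P), IsFinPartIso A f →
    ∃ g : P → P, Monotone g ∧ Function.Surjective g ∧ ∀ a ∈ A, g a = f a

/-!
If both relations "comparable" and "equal or incomparable" failed to be transitive, homogeneity
would give, for every `a < b`, an element incomparable to both, and would make `P` directed or
codirected; an antichain could then be enlarged forever. So one of them is transitive.
If comparability is transitive, `P` is a finite union of chains which any surjective monotone map
permutes, so no such map sends an incomparable pair to a pair `p < q`. If "equal or incomparable"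
is transitive, `P` is a chain of finite antichains; a surjective monotone map fixing `x` maps the
level of `x` onto a superset of it, which by finiteness is the level itself, so it cannot send a
`y` incomparable to `x` out of that level. Either way the monomorphism of an incomparable pair
onto a suitable pair of distinct points has no surjective monotone extension.
-/

open Function Relation OrderDual

section Incomp

variable {P : Type*} [PartialOrder P] {a b c : P}

theorem Incomp.symm (h : Incomp a b) : Incomp b a := ⟨h.2, h.1⟩

theorem Incomp.not_symmGen (h : Incomp a b) : ¬ SymmGen (· ≤ ·) a b := not_or.2 h

theorem Incomp.of_map {Q : Type*} [PartialOrder Q] {g : P → Q} (hg : Monotone g)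
    (h : Incomp (g a) (g b)) : Incomp a b :=
  ⟨mt (@hg a b) h.1, mt (@hg b a) h.2⟩

theorem Incomp.lt_of_le_of_le (h : Incomp a b) (ha : a ≤ c) (hb : b ≤ c) : a < c :=
  ha.lt_of_ne fun e => h.2 (e ▸ hb)

theorem lt_or_gt_of_not_incomp (h : ¬ Incomp a b) (hne : a ≠ b) : a < b ∨ b < a := by
  by_cases hab : a ≤ b
  · exact Or.inl (hab.lt_of_ne hne)
  · exact Or.inr ((not_not.1 fun hba => h ⟨hab, hba⟩).lt_of_ne hne.symm)

end Incomp

theorem exists_infinite_antichain_of_forall_exists_ssuperset {α : Type*} (r : α → α → Prop)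
    (p : Finset α → Prop) (hanti : ∀ A, p A → IsAntichain r (A : Set α))
    (hstep : ∀ A, p A → ∃ B, p B ∧ A ⊂ B) {A₀ : Finset α} (h₀ : p A₀) :
    ∃ S : Set α, IsAntichain r S ∧ S.Infinite := by
  choose! F hF using hstep
  set A : ℕ → Finset α := fun n => F^[n] A₀
  have hsucc (n : ℕ) : A (n + 1) = F (A n) := iterate_succ_apply' F n A₀
  have hgood (n : ℕ) : p (A n) := by
    induction n with
    | zero => exact h₀
    | succ n ih => exact hsucc n ▸ (hF _ ih).1
  have hmono : StrictMono A := strictMono_nat_of_lt_succ fun n => hsucc n ▸ (hF _ (hgood n)).2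
  refine ⟨⋃ n, (A n : Set α), ?_, fun hfin => ?_⟩
  · intro a ha b hb hne
    obtain ⟨m, ha⟩ := Set.mem_iUnion.1 ha
    obtain ⟨n, hb⟩ := Set.mem_iUnion.1 hb
    exact hanti _ (hgood (max m n)) (hmono.monotone (le_max_left m n) ha)
      (hmono.monotone (le_max_right m n) hb) hne
  · exact Set.infinite_of_injective_forall_mem (Finset.coe_injective.comp hmono.injective)
      (fun n => Set.subset_iUnion (fun n => (A n : Set α)) n) hfin.finite_subsets

section InfiniteAntichain

variable {P : Type*} [PartialOrder P]

theorem isAntichain_insert_of_forall_incomp [DecidableEq P] {A : Finset P} {s : P}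
    (hA : IsAntichain (· ≤ ·) (A : Set P)) (hs : ∀ a ∈ A, Incomp s a) :
    IsAntichain (· ≤ ·) ((insert s A : Finset P) : Set P) := by
  rw [Finset.coe_insert]
  exact hA.insert (fun a ha _ => (hs a ha).2) (fun a ha _ => (hs a ha).1)

theorem exists_infinite_antichain_of_isDirectedOrder_of_isCodirectedOrder
    [IsDirectedOrder P] [IsCodirectedOrder P]
    (hsplit : ∀ a b : P, a < b → ∃ s, Incomp s a ∧ Incomp s b) {b y : P} (hby : b < y) :
    ∃ S : Set P, IsAntichain (· ≤ ·) S ∧ S.Infinite := by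
  classical
  refine exists_infinite_antichain_of_forall_exists_ssuperset _
    (fun A => IsAntichain (· ≤ ·) (A : Set P) ∧ ∃ b y, b < y ∧ ∀ a ∈ A, b ≤ a ∧ a ≤ y)
    (fun _ h => h.1) ?_ (A₀ := ∅) ⟨by simp, b, y, hby, by simp⟩
  rintro A ⟨hA, b, y, hby, hAby⟩
  obtain ⟨s, hsb, hsy⟩ := hsplit b y hby
  have hs (a) (ha : a ∈ A) : Incomp s a :=
    ⟨fun h => hsy.1 (h.trans (hAby a ha).2), fun h => hsb.2 ((hAby a ha).1.trans h)⟩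
  obtain ⟨y', hsy', hyy'⟩ := exists_ge_ge s y
  obtain ⟨b', hb's, hb'b⟩ := exists_le_le s b
  refine ⟨insert s A, ⟨isAntichain_insert_of_forall_incomp hA hs, b', y',
    hb'b.trans_lt (hby.trans_le hyy'), ?_⟩, Finset.ssubset_insert fun h => (hs s h).1 le_rfl⟩
  simp only [Finset.mem_insert, forall_eq_or_imp]
  exact ⟨⟨hb's, hsy'⟩, fun a ha => ⟨hb'b.trans (hAby a ha).1, (hAby a ha).2.trans hyy'⟩⟩

theorem exists_infinite_antichain_of_isDirectedOrder_of_not_bddBelow [IsDirectedOrder P]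
    (hsplit : ∀ a b : P, a < b → ∃ s, Incomp s a ∧ Incomp s b)
    (hbdd : ∀ a b : P, Incomp a b → ¬ BddBelow {a, b}) {b y : P} (hby : b < y) :
    ∃ S : Set P, IsAntichain (· ≤ ·) S ∧ S.Infinite := by
  classical
  refine exists_infinite_antichain_of_forall_exists_ssuperset _
    (fun A => IsAntichain (· ≤ ·) (A : Set P) ∧ ∃ b y, b < y ∧ ∀ a ∈ A, a ≤ y)
    (fun _ h => h.1) ?_ (A₀ := ∅) ⟨by simp, b, y, hby, by simp⟩
  rintro A ⟨hA, b, y, hby, hAy⟩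
  obtain ⟨s, -, hsy⟩ := hsplit b y hby
  have hs (a) (ha : a ∈ A) : Incomp s a :=
    ⟨fun h => hsy.1 (h.trans (hAy a ha)), fun h => hbdd s y hsy ⟨a, by simp [h, hAy a ha]⟩⟩
  obtain ⟨y', hsy', hyy'⟩ := exists_ge_ge s y
  refine ⟨insert s A, ⟨isAntichain_insert_of_forall_incomp hA hs, b, y', hby.trans_le hyy', ?_⟩,
    Finset.ssubset_insert fun h => (hs s h).1 le_rfl⟩
  simp only [Finset.mem_insert, forall_eq_or_imp]
  exact ⟨hsy', fun a ha => (hAy a ha).trans hyy'⟩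

end InfiniteAntichain

namespace IEbarHomogeneous

variable {P : Type*} [PartialOrder P] (hIE : IEbarHomogeneous P)
include hIE

theorem dual : IEbarHomogeneous Pᵒᵈ := fun A f hf =>
  (hIE A f fun a₁ h₁ a₂ h₂ => hf a₂ h₂ a₁ h₁).imp fun _ ⟨hg, hgs, hgA⟩ => ⟨hg.dual, hgs, hgA⟩

theorem exists_map_pair {a b p q : P} (hab : a ≤ b ↔ p ≤ q) (hba : b ≤ a ↔ q ≤ p) :
    ∃ g : P → P, Monotone g ∧ Surjective g ∧ g a = p ∧ g b = q := by
  classical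
  obtain rfl | hne := eq_or_ne b a
  · obtain rfl : q = p := le_antisymm (hba.1 le_rfl) (hab.1 le_rfl)
    obtain ⟨g, hg, hgs, hgA⟩ := hIE {b} (fun _ => q) (by simp [IsFinPartIso])
    exact ⟨g, hg, hgs, hgA b (by simp), hgA b (by simp)⟩
  · obtain ⟨g, hg, hgs, hgA⟩ := hIE {a, b} (fun t => if t = a then p else q)
      (by simp [IsFinPartIso, hne, hab, hba])
    exact ⟨g, hg, hgs, by simpa using hgA a (by simp), by simpa [hne] using hgA b (by simp)⟩

theorem exists_incomp {x y : P} (hxy : Incomp x y) (p : P) : ∃ s, Incomp s p := by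
  obtain ⟨g, hg, hgs, hgp, -⟩ := hIE.exists_map_pair (a := p) (b := p) (p := x) (q := x)
    (iff_of_true le_rfl le_rfl) (iff_of_true le_rfl le_rfl)
  obtain ⟨s, rfl⟩ := hgs y
  exact ⟨s, Incomp.of_map hg (hgp ▸ hxy.symm)⟩

theorem exists_incomp_of_lt {u v w : P} (huw : u < w) (hu : Incomp v u) (hw : Incomp v w)
    {a b : P} (hab : a < b) : ∃ s, Incomp s a ∧ Incomp s b := by
  obtain ⟨g, hg, hgs, hga, hgb⟩ := hIE.exists_map_pair (iff_of_true hab.le huw.le)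
    (iff_of_false hab.not_ge huw.not_ge)
  obtain ⟨s, rfl⟩ := hgs v
  exact ⟨s, Incomp.of_map hg (hga ▸ hu), Incomp.of_map hg (hgb ▸ hw)⟩

theorem isDirectedOrder {x z : P} (hxz : Incomp x z) (hbdd : BddAbove {x, z}) :
    IsDirectedOrder P where
  directed a b := by
    obtain ⟨y, hy⟩ := hbdd
    by_cases hab : a ≤ b
    · exact ⟨b, hab, le_rfl⟩
    by_cases hba : b ≤ a
    · exact ⟨a, le_rfl, hba⟩
    obtain ⟨g, hg, -, hga, hgb⟩ := hIE.exists_map_pair (iff_of_false hxz.1 hab)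
      (iff_of_false hxz.2 hba)
    exact ⟨g y, hga ▸ hg (hy (by simp)), hgb ▸ hg (hy (by simp))⟩

theorem exists_infinite_antichain (hsplit : ∀ a b : P, a < b → ∃ s, Incomp s a ∧ Incomp s b)
    {x z : P} (hxz : Incomp x z) (hbdd : BddAbove {x, z}) :
    ∃ S : Set P, IsAntichain (· ≤ ·) S ∧ S.Infinite := by
  have := hIE.isDirectedOrder hxz hbdd
  obtain ⟨y, hy⟩ := hbdd
  have hxy : x < y := hxz.lt_of_le_of_le (hy (by simp)) (hy (by simp))
  by_cases hΛ : ∃ a b : P, Incomp a b ∧ BddBelow {a, b}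
  · obtain ⟨a, b, hab, c, hc⟩ := hΛ
    have : IsCodirectedOrder P := hIE.dual.isDirectedOrder (x := toDual a) (z := toDual b)
      hab.symm ⟨toDual c, by simpa using hc⟩
    exact exists_infinite_antichain_of_isDirectedOrder_of_isCodirectedOrder hsplit hxy
  · push Not at hΛ
    exact exists_infinite_antichain_of_isDirectedOrder_of_not_bddBelow hsplit hΛ hxy

theorem exists_infinite_antichain_of_bddBelow
    (hsplit : ∀ a b : P, a < b → ∃ s, Incomp s a ∧ Incomp s b)
    {x z : P} (hxz : Incomp x z) (hbdd : BddBelow {x, z}) :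
    ∃ S : Set P, IsAntichain (· ≤ ·) S ∧ S.Infinite := by
  obtain ⟨y, hy⟩ := hbdd
  obtain ⟨S, hS, hSinf⟩ := hIE.dual.exists_infinite_antichain
    (fun a b hab => (hsplit _ _ hab).imp fun s hs => ⟨hs.2.symm, hs.1.symm⟩)
    (x := toDual x) (z := toDual z) hxz.symm ⟨toDual y, by simpa using hy⟩
  exact ⟨ofDual ⁻¹' S, hS.swap, hSinf⟩

theorem isTrans_symmGen_or_isTrans_eq_or_incomp
    (hfin : ∀ S : Set P, IsAntichain (· ≤ ·) S → S.Finite) :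
    IsTrans P (SymmGen (· ≤ ·)) ∨ IsTrans P (fun a b => a = b ∨ Incomp a b) := by
  refine or_iff_not_imp_left.2 fun hCT => ⟨fun u v w huv hvw => ?_⟩
  by_contra huw
  push Not at huw
  rcases huv with rfl | huv
  · exact huw.2 (hvw.resolve_left huw.1)
  rcases hvw with rfl | hvw
  · exact huw.2 huv
  have hsplit (a b : P) (hab : a < b) : ∃ s, Incomp s a ∧ Incomp s b := by
    rcases lt_or_gt_of_not_incomp huw.2 huw.1 with h | h
    · exact hIE.exists_incomp_of_lt h huv.symm hvw hab
    · exact hIE.exists_incomp_of_lt h hvw huv.symm hab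
  obtain ⟨a, b, c, hab, hbc, hac⟩ : ∃ a b c : P,
      SymmGen (· ≤ ·) a b ∧ SymmGen (· ≤ ·) b c ∧ Incomp a c := by
    by_contra! h
    exact hCT ⟨fun a b c hab hbc => not_not.1 fun hac => h a b c hab hbc (not_or.1 hac)⟩
  obtain ⟨S, hS, hSinf⟩ : ∃ S : Set P, IsAntichain (· ≤ ·) S ∧ S.Infinite := by
    rcases hab with hab | hba <;> rcases hbc with hbc | hcb
    · exact absurd (hab.trans hbc) hac.1
    · exact hIE.exists_infinite_antichain hsplit hac ⟨b, by simp [hab, hcb]⟩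
    · exact hIE.exists_infinite_antichain_of_bddBelow hsplit hac ⟨b, by simp [hba, hbc]⟩
    · exact absurd (hcb.trans hba) hac.2
  exact hSinf (hfin S hS)

end IEbarHomogeneous

section Rigidity

variable {P : Type*} [PartialOrder P] {g : P → P}

theorem symmGen_of_symmGen_map (hCT : IsTrans P (SymmGen (· ≤ ·)))
    (hfin : ∀ S : Set P, IsAntichain (· ≤ ·) S → S.Finite) (hg : Monotone g)
    (hgs : Surjective g) {a b : P} (h : SymmGen (· ≤ ·) (g a) (g b)) : SymmGen (· ≤ ·) a b := by
  let s : Setoid P := ⟨SymmGen (· ≤ ·), ⟨fun _ => .of_le le_rfl, .symm, hCT.trans _ _ _⟩⟩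
  have : Finite (Quotient s) := by
    have hanti : IsAntichain (· ≤ ·) (Set.range (Quotient.out : Quotient s → P)) := by
      rintro _ ⟨c, rfl⟩ _ ⟨d, rfl⟩ hne hle
      exact hne (congrArg _ (by simpa using Quotient.sound (s := s) (.of_le hle)))
    exact (Set.finite_range_iff Quotient.out_injective).1 (hfin _ hanti)
  let G : Quotient s → Quotient s := Quotient.map g fun _ _ => Or.imp (@hg _ _) (@hg _ _)
  have hG : Surjective G := Quotient.ind fun p => (hgs p).elim fun q hq => ⟨⟦q⟧, congrArg _ hq⟩
  exact Quotient.exact (Finite.injective_iff_surjective.2 hG (Quotient.sound h : G ⟦a⟧ = G ⟦b⟧))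

theorem eq_or_incomp_of_map (hIT : IsTrans P (fun a b => a = b ∨ Incomp a b))
    (hpartner : ∀ p : P, ∃ s, Incomp s p) (hg : Monotone g) (hgs : Surjective g) {a b : P}
    (h : g a = g b ∨ Incomp (g a) (g b)) : a = b ∨ Incomp a b := by
  rcases h with h | h
  · obtain ⟨e, he⟩ := hpartner (g a)
    obtain ⟨r, rfl⟩ := hgs e
    exact hIT.trans a r b (Or.inr (he.of_map hg).symm) (Or.inr ((h ▸ he).of_map hg))
  · exact Or.inr (h.of_map hg)

theorem map_eq_or_incomp_of_map_eq_self (hIT : IsTrans P (fun a b => a = b ∨ Incomp a b))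
    (hfin : ∀ S : Set P, IsAntichain (· ≤ ·) S → S.Finite) (hpartner : ∀ p : P, ∃ s, Incomp s p)
    (hg : Monotone g) (hgs : Surjective g) {x y : P} (hgx : g x = x) (hy : y = x ∨ Incomp y x) :
    g y = x ∨ Incomp (g y) x := by
  set C := {t | t = x ∨ Incomp t x}
  have hC : C.Finite := hfin C fun t ht u hu hne =>
    ((hIT.trans _ _ _ ht (hu.imp Eq.symm Incomp.symm)).resolve_left hne).1
  have hsub : C ⊆ g '' C := fun t ht => by
    obtain ⟨u, rfl⟩ := hgs t
    exact ⟨u, eq_or_incomp_of_map hIT hpartner hg hgs (hgx.symm ▸ ht), rfl⟩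
  by_contra hgy
  have hssub : C ⊂ g '' C := ssubset_of_subset_of_ne hsub fun h => hgy <| by
    change g y ∈ C
    exact h ▸ Set.mem_image_of_mem g hy
  exact (Set.ncard_lt_ncard hssub (hC.image g)).not_ge (Set.ncard_image_le hC)

end Rigidity

def MEbarHomogeneous (P : Type*) [PartialOrder P] : Prop :=
  ∀ (A : Finset P) (f : P → P), Set.InjOn f A → (∀ a₁ ∈ A, ∀ a₂ ∈ A, a₁ < a₂ → f a₁ < f a₂) →
    ∃ g : P → P, Monotone g ∧ Surjective g ∧ ∀ a ∈ A, g a = f a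

theorem MEbarHomogeneous.exists_map_pair_of_incomp {P : Type*} [PartialOrder P]
    (hME : MEbarHomogeneous P) {x y u v : P} (hxy : Incomp x y) (huv : u ≠ v) :
    ∃ g : P → P, Monotone g ∧ Surjective g ∧ g x = u ∧ g y = v := by
  classical
  have hne : y ≠ x := fun h => hxy.1 h.ge
  obtain ⟨g, hg, hgs, hgA⟩ := hME {x, y} (fun t => if t = x then u else v)
    (by simp [Set.InjOn, hne, huv, huv.symm])
    (by simp [hne, hxy.1, hxy.2, lt_iff_le_not_ge])
  exact ⟨g, hg, hgs, by simpa using hgA x (by simp), by simpa [hne] using hgA y (by simp)⟩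

theorem IEbar_finite_antichains_not_MEbar_general (P : Type*) [PartialOrder P]
    (hIE : IEbarHomogeneous P)
    (hnc : ∃ a b : P, Incomp a b) (hna : ∃ a b : P, a < b)
    (hfin : ∀ S : Set P, IsAntichain (· ≤ ·) S → S.Finite) :
    ∃ (A : Finset P) (f : P → P), Set.InjOn f ↑A ∧
      (∀ a₁ ∈ A, ∀ a₂ ∈ A, a₁ < a₂ → f a₁ < f a₂) ∧
      ¬ ∃ g : P → P, Monotone g ∧ Function.Surjective g ∧ ∀ a ∈ A, g a = f a := by
  suffices ¬ MEbarHomogeneous P by simpa [MEbarHomogeneous] using this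
  intro hME
  obtain ⟨x, y, hxy⟩ := hnc
  obtain ⟨p, q, hpq⟩ := hna
  rcases hIE.isTrans_symmGen_or_isTrans_eq_or_incomp hfin with hCT | hIT
  · obtain ⟨g, hg, hgs, rfl, rfl⟩ := hME.exists_map_pair_of_incomp hxy hpq.ne
    exact hxy.not_symmGen (symmGen_of_symmGen_map hCT hfin hg hgs (.of_le hpq.le))
  · obtain ⟨d, hd⟩ : ∃ d, ¬ (d = x ∨ Incomp d x) := by
      by_contra! h
      exact (hIT.trans p x q (h p) ((h q).imp Eq.symm Incomp.symm)).elim hpq.ne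
        fun h => h.1 hpq.le
    obtain ⟨g, hg, hgs, hgx, rfl⟩ :=
      hME.exists_map_pair_of_incomp hxy fun h => hd (Or.inl h.symm)
    exact hd (map_eq_or_incomp_of_map_eq_self hIT hfin (hIE.exists_incomp hxy) hg hgs hgx
      (Or.inr hxy.symm))

/-- A countable IĒ-homogeneous poset which is neither a chain nor an antichain, all of
whose antichains are finite, is not MĒ-homogeneous: some injective `<`-preserving map
between finite subsets has no extension to a surjective ≤-preserving map. -/
theorem IEbar_finite_antichains_not_MEbar (P : Type*) [PartialOrder P] [Countable P]
    (hIE : IEbarHomogeneous P)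
    (hnc : ∃ a b : P, Incomp a b) (hna : ∃ a b : P, a < b)
    (hfin : ∀ S : Set P, IsAntichain (· ≤ ·) S → S.Finite) :
    ∃ (A : Finset P) (f : P → P), Set.InjOn f ↑A ∧
      (∀ a₁ ∈ A, ∀ a₂ ∈ A, a₁ < a₂ → f a₁ < f a₂) ∧
      ¬ ∃ g : P → P, Monotone g ∧ Function.Surjective g ∧ ∀ a ∈ A, g a = f a :=
  IEbar_finite_antichains_not_MEbar_general P hIE hnc hna hfin
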